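/- Let n ≥ 1 and let P be an n-absorbing I-prime ideal of a commutative ring R with identity. Then for all x₁, …, x_{n+1} ∈ R with x₁⋯x_{n+1} ∈ √P \ √(I·P), there exists an index i ∈ {1, …, n+1} such that the product of the remaining n elements x₁⋯x_{i-1}x_{i+1}⋯x_{n+1} lies in √P. -/
import Mathlib


/-- A proper ideal `P` of a commutative ring `R` is an `n`-absorbing `I`-prime ideal
if whenever a product of `n+1` elements lies in `P \ I*P`, the product of some `n`
of them (all but one) lies in `P`. -/
def IsNAbsorbingIPrime {R : Type*} [CommRing R] (n : ℕ) (I P : Ideal R) : Prop :=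
  P ≠ ⊤ ∧ ∀ x : Fin (n + 1) → R, (∏ i, x i) ∈ P → (∏ i, x i) ∉ I * P →
    ∃ i : Fin (n + 1), (∏ j ∈ Finset.univ.erase i, x j) ∈ P

theorem stmt_16 {R : Type*} [CommRing R] (n : ℕ) (hn : 1 ≤ n) (I P : Ideal R)
    (hP : IsNAbsorbingIPrime n I P) :
    ∀ x : Fin (n + 1) → R, (∏ i, x i) ∈ P.radical → (∏ i, x i) ∉ (I * P).radical →
      ∃ i : Fin (n + 1), (∏ j ∈ Finset.univ.erase i, x j) ∈ P.radical := by
  intro x hx hx'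
  obtain ⟨m, hm⟩ := hx
  have hnotIP : (∏ i, x i) ^ m ∉ I * P := fun h => hx' ⟨m, h⟩
  obtain ⟨i, hi⟩ := hP.2 (fun i => x i ^ m)
    (by rwa [Finset.prod_pow]) (by rwa [Finset.prod_pow])
  exact ⟨i, m, by rwa [Finset.prod_pow] at hi⟩
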